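/- If an operator O acts on f ∈ L¹(0,b) both as a fractional integral with analytic kernel, O f(x) = ∫_0^x (x−t)^{α−1} A((x−t)^β) f(t) dt, and as a weighted Riemann–Liouville integral, O f(x) = (1/(Γ(α)w(x))) ∫_0^x (x−t)^{α−1} w(t) f(t) dt, where A is analytic and w is real, continuous and nonvanishing, then w(x) = w(0)·e^{κx} for some κ ∈ ℝ, i.e., O is a tempered fractional integral. -/

import Mathlib

/-!
Testing the identity of the two operators against indicators of subintervals and differentiating
the resulting integrals gives `Γ(α) A((x - t)^β) w(x) = w(t)` for `0 < t < x < b`. Thus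
`w(t) = g(s) w(t + s)` with `g` differentiable, so `w` is differentiable with
`w'(t) = -(g'(s) / g(s)) w(t)` whenever `t + s < b`. The factor cannot depend on `s`, so
`w' = κ w` on `(0, b)`, and the mean value theorem applied to `w(t) e^{-κt}` on `[0, x]` finishes.
-/

open MeasureTheory intervalIntegral Set Filter Topology Real

theorem intervalIntegral_mul_indicator_Ioc (K : ℝ → ℝ) {a c s u : ℝ}
    (has : a ≤ s) (hsu : s ≤ u) (huc : u ≤ c) :
    ∫ t in a..c, K t * (Ioc s u).indicator 1 t = ∫ t in s..u, K t := by
  have hK : (fun t => K t * (Ioc s u).indicator 1 t) = (Ioc s u).indicator K := by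
    ext t
    by_cases ht : t ∈ Ioc s u <;> simp [ht]
  rw [hK, integral_of_le (has.trans (hsu.trans huc)), integral_of_le hsu,
    setIntegral_indicator measurableSet_Ioc,
    inter_eq_self_of_subset_right (Ioc_subset_Ioc has huc)]

theorem hasDerivAt_intervalIntegral_of_continuousOn {K : ℝ → ℝ} {a c s t : ℝ}
    (hK : ContinuousOn K (Ioo a c)) (hs : s ∈ Ioo a c) (ht : t ∈ Ioo a c) :
    HasDerivAt (fun u => ∫ τ in s..u, K τ) (K t) t := by
  have hst : uIcc s t ⊆ Ioo a c := ordConnected_Ioo.uIcc_subset hs ht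
  exact integral_hasDerivAt_right ((hK.mono hst).intervalIntegrable)
    (hK.stronglyMeasurableAtFilter isOpen_Ioo t ht) (hK.continuousAt (isOpen_Ioo.mem_nhds ht))

theorem eqOn_of_forall_intervalIntegral_eq {K₁ K₂ : ℝ → ℝ} {a c : ℝ}
    (h₁ : ContinuousOn K₁ (Ioo a c)) (h₂ : ContinuousOn K₂ (Ioo a c))
    (h : ∀ s u, a < s → s < u → u < c → ∫ τ in s..u, K₁ τ = ∫ τ in s..u, K₂ τ) :
    EqOn K₁ K₂ (Ioo a c) := by
  intro t ht
  have hs : (a + t) / 2 ∈ Ioo a c := ⟨by linarith [ht.1], by linarith [ht.1, ht.2]⟩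
  have hnear : (fun u => ∫ τ in (a + t) / 2..u, K₁ τ) =ᶠ[𝓝 t]
      fun u => ∫ τ in (a + t) / 2..u, K₂ τ :=
    eventually_of_mem (isOpen_Ioo.mem_nhds ⟨by linarith [ht.1], ht.2⟩)
      fun u hu => h _ u hs.1 hu.1 hu.2
  exact (hasDerivAt_intervalIntegral_of_continuousOn h₁ hs ht).unique
    ((hasDerivAt_intervalIntegral_of_continuousOn h₂ hs ht).congr_of_eventuallyEq hnear)

theorem gamma_mul_kernel_mul_eq_of_forall_integral_eq {α β x t : ℝ} {A w : ℝ → ℝ}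
    (hΓ : Gamma α ≠ 0) (hA : Continuous A) (hwc : ContinuousOn w (Ioo 0 x)) (hwx : w x ≠ 0)
    (ht : t ∈ Ioo 0 x)
    (heq : ∀ f : ℝ → ℝ, Integrable f →
      (∫ τ in (0:ℝ)..x, (x - τ) ^ (α - 1) * A ((x - τ) ^ β) * f τ)
        = (1 / (Gamma α * w x)) * ∫ τ in (0:ℝ)..x, (x - τ) ^ (α - 1) * w τ * f τ) :
    Gamma α * A ((x - t) ^ β) * w x = w t := by
  set c := 1 / (Gamma α * w x)
  have hpow (γ : ℝ) : ContinuousOn (fun τ : ℝ => (x - τ) ^ γ) (Ioo 0 x) := fun τ hτ =>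
    ContinuousAt.continuousWithinAt (by fun_prop (disch := exact Or.inl (sub_pos.2 hτ.2).ne'))
  have hkernel : EqOn (fun τ => (x - τ) ^ (α - 1) * A ((x - τ) ^ β))
      (fun τ => c * ((x - τ) ^ (α - 1) * w τ)) (Ioo 0 x) := by
    refine eqOn_of_forall_intervalIntegral_eq ((hpow _).mul (hA.comp_continuousOn (hpow β)))
      (continuousOn_const.mul ((hpow _).mul hwc)) fun s u hs hsu hux => ?_
    have htest := heq ((Ioc s u).indicator 1)
      ((integrable_indicator_iff measurableSet_Ioc).2 (integrableOn_const (by simp)))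
    rwa [intervalIntegral_mul_indicator_Ioc _ hs.le hsu.le hux.le,
      intervalIntegral_mul_indicator_Ioc (fun τ => (x - τ) ^ (α - 1) * w τ) hs.le hsu.le hux.le,
      ← intervalIntegral.integral_const_mul] at htest
  have hpos : (x - t) ^ (α - 1) ≠ 0 := (rpow_pos_of_pos (sub_pos.2 ht.2) _).ne'
  have hA_eq : A ((x - t) ^ β) = c * w t :=
    mul_left_cancel₀ hpos ((hkernel ht).trans (by ring))
  rw [hA_eq]
  simp only [c]
  field_simp

section TranslationEquation

variable {g w : ℝ → ℝ} {b : ℝ}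
  (hfe : ∀ t x, 0 < t → t < x → x < b → g (x - t) * w x = w t)
include hfe

theorem hasDerivAt_of_mul_translate_eq {t s : ℝ} (hg : DifferentiableAt ℝ g s)
    (ht : 0 < t) (hs : 0 < s) (hts : t + s < b) :
    HasDerivAt w (-deriv g s * w (t + s)) t := by
  have hnear : (fun u => g (t + s - u) * w (t + s)) =ᶠ[𝓝 t] w :=
    eventually_of_mem (isOpen_Ioo.mem_nhds (⟨ht, by linarith⟩ : t ∈ Ioo 0 (t + s)))
      fun u hu => hfe u (t + s) hu.1 hu.2 hts
  have hderiv := (hg.hasDerivAt.comp_of_eq t ((hasDerivAt_id t).const_sub (t + s))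
    (by simp)).mul_const (w (t + s))
  exact (hderiv.congr_of_eventuallyEq hnear.symm).congr_deriv (by simp)

theorem exists_hasDerivAt_eq_mul_of_mul_translate_eq
    (hg : ∀ s ∈ Ioo 0 b, DifferentiableAt ℝ g s) (hw : ∀ t ∈ Ioo 0 b, w t ≠ 0) :
    ∃ κ, ∀ t ∈ Ioo 0 b, HasDerivAt w (κ * w t) t := by
  set ρ := fun s => -(deriv g s / g s)
  have hρ : ∀ t s, 0 < t → 0 < s → t + s < b → HasDerivAt w (ρ s * w t) t := by
    intro t s ht hs hts
    have hgs : g s * w (t + s) = w t := by simpa using hfe t (t + s) ht (by linarith) hts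
    have hgs₀ : g s ≠ 0 := left_ne_zero_of_mul (hgs ▸ hw t ⟨ht, by linarith⟩)
    convert hasDerivAt_of_mul_translate_eq hfe (hg s ⟨hs, by linarith⟩) ht hs hts using 1
    rw [← hgs]
    simp only [ρ]
    field_simp
  refine ⟨ρ (b / 2), fun t ht => ?_⟩
  obtain ⟨ht₀, htb⟩ := ht
  obtain ⟨t', ht'₀, ht't, ht'b⟩ : ∃ t', 0 < t' ∧ t' ≤ t / 2 ∧ t' ≤ b / 4 :=
    ⟨min t (b / 2) / 2, half_pos (lt_min ht₀ (by linarith)),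
      by linarith [min_le_left t (b / 2)], by linarith [min_le_right t (b / 2)]⟩
  -- `ρ s * w t'` is the derivative of `w` at `t'` whenever `t' + s < b`, so `ρ` is constant
  have hρ_eq : ρ ((b - t) / 2) = ρ (b / 2) :=
    mul_right_cancel₀ (hw t' ⟨ht'₀, by linarith⟩)
      ((hρ t' _ ht'₀ (by linarith) (by linarith)).unique
        (hρ t' _ ht'₀ (by linarith) (by linarith)))
  exact hρ_eq ▸ hρ t _ ht₀ (by linarith) (by linarith)

end TranslationEquation

theorem eq_mul_exp_of_hasDerivAt_eq_mul {f : ℝ → ℝ} {κ a x : ℝ} (hax : a < x)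
    (hc : ContinuousOn f (Icc a x)) (hd : ∀ t ∈ Ioo a x, HasDerivAt f (κ * f t) t) :
    f x = f a * exp (κ * (x - a)) := by
  set φ := fun t => f t * exp (-κ * (t - a))
  have hφd : ∀ t ∈ Ioo a x, HasDerivAt φ 0 t := fun t ht =>
    ((hd t ht).mul (((hasDerivAt_id t).sub_const a).const_mul (-κ)).exp).congr_deriv (by ring)
  obtain ⟨_, _, hslope⟩ := exists_hasDerivAt_eq_slope φ (fun _ => 0) hax
    (hc.mul (by fun_prop)) hφd
  have hφ : φ x = f a := by
    rw [eq_comm, div_eq_zero_iff, sub_eq_zero] at hslope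
    simpa [φ] using hslope.resolve_right (sub_ne_zero.2 hax.ne')
  rw [← hφ, mul_assoc, ← exp_add]
  simp

theorem analytic_kernel_and_weighted_implies_tempered_general
    (b α β : ℝ) (hα : 0 < α)
    (A : ℝ → ℝ) (hA : AnalyticOn ℝ A Set.univ)
    (w : ℝ → ℝ) (hwc : ContinuousOn w (Set.Ico 0 b))
    (hw : ∀ x ∈ Set.Ico 0 b, w x ≠ 0)
    (heq : ∀ f : ℝ → ℝ, IntegrableOn f (Set.Ioo 0 b) →
      ∀ x ∈ Set.Ioo 0 b,
        (∫ t in (0:ℝ)..x, (x - t) ^ (α - 1) * A ((x - t) ^ β) * f t)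
          = (1 / (Real.Gamma α * w x)) * ∫ t in (0:ℝ)..x, (x - t) ^ (α - 1) * w t * f t) :
    ∃ κ : ℝ, ∀ x ∈ Set.Ico 0 b, w x = w 0 * Real.exp (κ * x) := by
  have hA' : Differentiable ℝ A := differentiableOn_univ.1 hA.differentiableOn
  have hfe : ∀ t x, 0 < t → t < x → x < b → Gamma α * A ((x - t) ^ β) * w x = w t :=
    fun t x ht htx hxb =>
      gamma_mul_kernel_mul_eq_of_forall_integral_eq (Gamma_pos_of_pos hα).ne' hA'.continuous
        (hwc.mono fun τ hτ => ⟨hτ.1.le, hτ.2.trans hxb⟩) (hw x ⟨by linarith, hxb⟩) ⟨ht, htx⟩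
        fun f hf => heq f hf.integrableOn x ⟨by linarith, hxb⟩
  obtain ⟨κ, hκ⟩ :=
    exists_hasDerivAt_eq_mul_of_mul_translate_eq (g := fun s => Gamma α * A (s ^ β)) hfe
      (fun s hs => by fun_prop (disch := exact Or.inl hs.1.ne'))
      fun t ht => hw t ⟨ht.1.le, ht.2⟩
  refine ⟨κ, fun x hx => ?_⟩
  rcases hx.1.eq_or_lt with rfl | hx₀
  · simp
  · simpa using eq_mul_exp_of_hasDerivAt_eq_mul hx₀ (hwc.mono (Icc_subset_Ico_right hx.2))
      fun t ht => hκ t ⟨ht.1, ht.2.trans hx.2⟩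

/-- If an operator is simultaneously a fractional integral with analytic kernel and a
weighted Riemann--Liouville fractional integral, then the weight is exponential, i.e.
the operator is a tempered fractional integral. -/
theorem analytic_kernel_and_weighted_implies_tempered
    (b α β : ℝ) (hb : 0 < b) (hα : 0 < α) (hβ : 0 < β)
    (A : ℝ → ℝ) (hA : AnalyticOn ℝ A Set.univ)
    (w : ℝ → ℝ) (hwc : ContinuousOn w (Set.Ico 0 b))
    (hw : ∀ x ∈ Set.Ico 0 b, w x ≠ 0)
    (heq : ∀ f : ℝ → ℝ, IntegrableOn f (Set.Ioo 0 b) →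
      ∀ x ∈ Set.Ioo 0 b,
        (∫ t in (0:ℝ)..x, (x - t) ^ (α - 1) * A ((x - t) ^ β) * f t)
          = (1 / (Real.Gamma α * w x)) * ∫ t in (0:ℝ)..x, (x - t) ^ (α - 1) * w t * f t) :
    ∃ κ : ℝ, ∀ x ∈ Set.Ico 0 b, w x = w 0 * Real.exp (κ * x) :=
  analytic_kernel_and_weighted_implies_tempered_general b α β hα A hA w hwc hw heq
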